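/- Let (S(t)) be a C₀-semigroup on H, Q a bounded self-adjoint nonnegative operator, and (S_Q(t))_{t≥0} a C₀-semigroup of self-adjoint contractions on H with S(t)Q^{1/2} = Q^{1/2}S_Q(t) for all t ≥ 0. Then for every t > 0 and all h, x ∈ H: ⟨S(t)Q^{1/2}h, x⟩² ≤ (1/t)|h|²⟨Q_tx, x⟩, where Q_tx = ∫₀^t S(s)QS(s)*x ds. (Equivalently, ‖Q_t^{−1/2}S(t)Q^{1/2}‖ ≤ 1/√t.) -/

import Mathlib

/-!
For `0 < s ≤ t`, writing `S t = S s ∘ S (t - s)` and using `S (t - s) Q^{1/2} = Q^{1/2} S_Q (t - s)`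
gives `⟨S t Q^{1/2} h, x⟩ = ⟨S_Q (t - s) h, Q^{1/2} S(s)* x⟩`. Cauchy–Schwarz and
`‖S_Q (t - s)‖ ≤ 1` bound its square by `|h|² |Q^{1/2} S(s)* x|² = |h|² ⟨S s Q S(s)* x, x⟩`, and
averaging over `s ∈ (0, t]` gives the claim.

The integrand `s ↦ S s Q S(s)* x` need not be continuous, but expanding `S(s)* x` in a Hilbert
basis, countable by separability, exhibits it as a pointwise limit of continuous functions; with
the Banach–Steinhaus bound on `‖S s‖` over `[0, t]` this makes it Bochner integrable.
-/

open MeasureTheory Filter Set ContinuousLinearMap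
open scoped RealInnerProductSpace InnerProductSpace

noncomputable section

variable {H : Type*} [NormedAddCommGroup H] [InnerProductSpace ℝ H] [CompleteSpace H]

section

variable {𝕜 E : Type*} [RCLike 𝕜] [NormedAddCommGroup E] [InnerProductSpace 𝕜 E]

theorem Orthonormal.countable_of_separableSpace [TopologicalSpace.SeparableSpace E] {ι : Type*}
    {v : ι → E} (hv : Orthonormal 𝕜 v) : Countable ι := by
  refine Pairwise.countable_of_isOpen_disjoint (s := fun i => Metric.ball (v i) (1 / 2))
    (fun i j hij => Metric.ball_disjoint_ball ?_) (fun _ => Metric.isOpen_ball)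
    (fun i => Metric.nonempty_ball.2 one_half_pos)
  have hnorm_sq : ‖v i - v j‖ ^ 2 = 2 := by
    rw [@norm_sub_sq 𝕜, hv.1 i, hv.1 j, hv.2 hij]; norm_num
  rw [dist_eq_norm]
  nlinarith [norm_nonneg (v i - v j)]

variable [CompleteSpace E]

theorem HilbertBasis.hasSum_apply_adjoint_apply {ι : Type*} (b : HilbertBasis ι 𝕜 E)
    (A B : E →L[𝕜] E) (x : E) : HasSum (fun i => ⟪B (b i), x⟫_𝕜 • A (b i)) (A (adjoint B x)) := by
  convert (b.hasSum_repr (adjoint B x)).mapL A using 2 with i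
  rw [map_smul, b.repr_apply_apply, adjoint_inner_right]

theorem aestronglyMeasurable_apply_adjoint_apply [TopologicalSpace.SeparableSpace E]
    {α : Type*} [MeasurableSpace α] {μ : Measure α} {A B : α → E →L[𝕜] E}
    (hA : ∀ v, AEStronglyMeasurable (fun a => A a v) μ)
    (hB : ∀ v, AEStronglyMeasurable (fun a => B a v) μ) (x : E) :
    AEStronglyMeasurable (fun a => A a (adjoint (B a) x)) μ := by
  obtain ⟨w, b, -⟩ := exists_hilbertBasis 𝕜 E
  have := b.orthonormal.countable_of_separableSpace
  refine aestronglyMeasurable_of_tendsto_ae atTop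
    (f := fun F : Finset w => fun a => ∑ i ∈ F, ⟪B a (b i), x⟫_𝕜 • A a (b i))
    (fun F => Finset.aestronglyMeasurable_fun_sum F fun i _ => ((hB _).inner_const).smul (hA _))
    (ae_of_all _ fun a => b.hasSum_apply_adjoint_apply (A a) (B a) x)

theorem IsCompact.exists_bound_of_continuousOn_apply {α F : Type*} [TopologicalSpace α]
    [NormedAddCommGroup F] [NormedSpace 𝕜 F] {K : Set α} (hK : IsCompact K)
    {A : α → E →L[𝕜] F} (hA : ∀ v, ContinuousOn (fun a => A a v) K) :
    ∃ M, ∀ a ∈ K, ‖A a‖ ≤ M := by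
  obtain ⟨M, hM⟩ := banach_steinhaus (g := fun a : K => A a) fun v => by
    obtain ⟨C, hC⟩ := hK.exists_bound_of_continuousOn (hA v)
    exact ⟨C, fun a => hC a a.2⟩
  exact ⟨M, fun a ha => hM ⟨a, ha⟩⟩

theorem IsCompact.integrableOn_apply_adjoint_apply [TopologicalSpace.SeparableSpace E]
    {α : Type*} [TopologicalSpace α] [MeasurableSpace α] [OpensMeasurableSpace α]
    {μ : Measure α} [IsFiniteMeasureOnCompacts μ] {K s : Set α} (hK : IsCompact K)
    (hs : MeasurableSet s) (hsK : s ⊆ K) {A B : α → E →L[𝕜] E}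
    (hA : ∀ v, ContinuousOn (fun a => A a v) K) (hB : ∀ v, ContinuousOn (fun a => B a v) K)
    (x : E) : IntegrableOn (fun a => A a (adjoint (B a) x)) s μ := by
  obtain ⟨MA, hMA⟩ := hK.exists_bound_of_continuousOn_apply hA
  obtain ⟨MB, hMB⟩ := hK.exists_bound_of_continuousOn_apply hB
  refine .of_bound ((measure_mono hsK).trans_lt hK.measure_lt_top)
    (aestronglyMeasurable_apply_adjoint_apply
      (fun v => (hA v).aestronglyMeasurable_of_subset_isCompact hK hs hsK)
      (fun v => (hB v).aestronglyMeasurable_of_subset_isCompact hK hs hsK) x)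
    (MA * (MB * ‖x‖)) ((ae_restrict_iff' hs).2 (ae_of_all _ fun a ha => ?_))
  have hMA0 : 0 ≤ MA := (norm_nonneg _).trans (hMA a (hsK ha))
  calc ‖A a (adjoint (B a) x)‖ ≤ ‖A a‖ * (‖adjoint (B a)‖ * ‖x‖) :=
        (A a).le_opNorm_of_le ((adjoint (B a)).le_opNorm x)
    _ ≤ MA * (MB * ‖x‖) := by
        rw [LinearIsometryEquiv.norm_map]
        gcongr
        exacts [hMA a (hsK ha), hMB a (hsK ha)]

end

theorem inner_sq_le_of_comp_eq_comp {E : Type*} [NormedAddCommGroup E] [InnerProductSpace ℝ E]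
    [CompleteSpace E] {A B C R : E →L[ℝ] E} (hR : IsSelfAdjoint R) (hC : ‖C‖ ≤ 1)
    (hAR : A ∘L R = R ∘L C) (h x : E) :
    ⟪B (A (R h)), x⟫ ^ 2 ≤ ‖h‖ ^ 2 * ⟪B ((R ∘L R) (adjoint B x)), x⟫ := by
  have hRsymm : ∀ u w, ⟪R u, w⟫ = ⟪u, R w⟫ := hR.isSymmetric
  set v := R (adjoint B x)
  have hlhs : ⟪B (A (R h)), x⟫ = ⟪C h, v⟫ := by
    rw [← adjoint_inner_right, ← hRsymm]
    exact congrArg (⟪·, adjoint B x⟫) (DFunLike.congr_fun hAR h)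
  have hrhs : ⟪B ((R ∘L R) (adjoint B x)), x⟫ = ‖v‖ ^ 2 := by
    rw [← adjoint_inner_right, comp_apply, hRsymm, real_inner_self_eq_norm_sq]
  have hCh : ‖C h‖ ≤ ‖h‖ := (C.le_opNorm h).trans (mul_le_of_le_one_left (norm_nonneg h) hC)
  rw [hlhs, hrhs, ← mul_pow, ← sq_abs]
  gcongr
  exact (abs_real_inner_le_norm _ _).trans (by gcongr)

theorem statement12 [TopologicalSpace.SeparableSpace H]
    (S : ℝ → H →L[ℝ] H)
    (hSadd : ∀ s t : ℝ, 0 ≤ s → 0 ≤ t → S (s + t) = (S s).comp (S t))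
    (hScont : ∀ x : H, ContinuousOn (fun t => S t x) (Set.Ici 0))
    (Q sqrtQ : H →L[ℝ] H)
    (hsqrt_sa : IsSelfAdjoint sqrtQ)
    (hsqrt_sq : sqrtQ.comp sqrtQ = Q)
    (SQ : ℝ → H →L[ℝ] H)
    (hSQcontr : ∀ t : ℝ, 0 ≤ t → ‖SQ t‖ ≤ 1)
    (hintertwine : ∀ t : ℝ, 0 ≤ t → (S t).comp sqrtQ = sqrtQ.comp (SQ t)) :
    ∀ t : ℝ, 0 < t → ∀ h x : H,
      ⟪S t (sqrtQ h), x⟫ ^ 2 ≤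
        (1 / t) * ‖h‖ ^ 2 *
          ⟪∫ s in Set.Ioc (0:ℝ) t, S s (Q (ContinuousLinearMap.adjoint (S s) x)), x⟫ := by
  intro t ht h x
  set f := fun s => S s (Q (ContinuousLinearMap.adjoint (S s) x))
  have hf : IntegrableOn f (Ioc 0 t) :=
    isCompact_Icc.integrableOn_apply_adjoint_apply (A := fun s => S s ∘L Q) measurableSet_Ioc
      Ioc_subset_Icc_self (fun v => (hScont (Q v)).mono Icc_subset_Ici_self)
      (fun v => (hScont v).mono Icc_subset_Ici_self) x
  have hpointwise : ∀ s ∈ Ioc 0 t, ⟪S t (sqrtQ h), x⟫ ^ 2 ≤ ‖h‖ ^ 2 * ⟪f s, x⟫ := by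
    intro s hs
    have hts : 0 ≤ t - s := sub_nonneg.2 hs.2
    have hsplit : S t = S s ∘L S (t - s) := by rw [← hSadd s _ hs.1.le hts, add_sub_cancel]
    have hbound := inner_sq_le_of_comp_eq_comp (B := S s) hsqrt_sa (hSQcontr _ hts)
      (hintertwine _ hts) h x
    rwa [hsqrt_sq, ← comp_apply, ← hsplit] at hbound
  have hintegral : ⟪S t (sqrtQ h), x⟫ ^ 2 * t ≤ ‖h‖ ^ 2 * ⟪∫ s in Ioc 0 t, f s, x⟫ := by
    have haverage := setIntegral_ge_of_const_le_real measurableSet_Ioc measure_Ioc_lt_top.ne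
      hpointwise ((hf.inner_const x).const_mul _)
    have hcomm := integral_inner (𝕜 := ℝ) hf x
    simp_rw [real_inner_comm _ x] at hcomm
    rwa [Real.volume_real_Ioc_of_le ht.le, sub_zero, integral_const_mul, hcomm] at haverage
  rw [one_div_mul_eq_div, div_mul_eq_mul_div, le_div_iff₀ ht]
  exact hintegral
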